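/- arXiv:1601.06433 — 2 statements merged into one kernel-verified Lean document; each statement's English description precedes it below -/
import Mathlib

section
/- For every k ∈ ℕ with k ≥ 1, the strict inequality Σ_{j=1}^{k} 1/(2j−1) < (ln k + ln 4 + γ + 1/(23k²))/2 holds, where γ is the Euler–Mascheroni constant. -/
/-!
Since `∑_{j ≤ k} 1/(2j-1) = H_{2k} - H_k/2`, it suffices to bound `H_{2k}` from above and `H_k`
from below by the expansion `log n + γ + 1/(2n) - 1/(12n²) (+ 1/(120n⁴))`. The sequence
`H_n - log n - 1/(2n) + 1/(12n²)` decreases to `γ`, and subtracting `1/(120n⁴)` gives a sequence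
increasing to `γ` from `n = 2` on. Both monotonicity claims follow from the alternating Taylor
bounds for `log (1 + 1/n)` of orders 8 and 11, which leave a polynomial in `n` to be positive.
The remaining slack is `1/48 + 1/1920 < 1/46`.
-/

open Real Set Finset Filter Topology

noncomputable def logTaylor (n : ℕ) (x : ℝ) : ℝ :=
  ∑ i ∈ range n, (-1) ^ i * x ^ (i + 1) / (i + 1)

lemma hasDerivAt_logTaylor (n : ℕ) (x : ℝ) :
    HasDerivAt (logTaylor n) (∑ i ∈ range n, (-x) ^ i) x := by
  unfold logTaylor
  refine (HasDerivAt.fun_sum fun i _ => ((hasDerivAt_pow (i + 1) x).const_mul _).div_const _)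
    |>.congr_deriv (Finset.sum_congr rfl fun i _ => ?_)
  rw [neg_pow]
  field_simp
  push_cast
  ring

lemma neg_one_pow_mul_log_one_add_sub_logTaylor_nonneg (n : ℕ) {x : ℝ} (hx : 0 ≤ x) :
    0 ≤ (-1) ^ n * (log (1 + x) - logTaylor n x) := by
  set f : ℝ → ℝ := fun y => (-1) ^ n * (log (1 + y) - logTaylor n y)
  have hf : ∀ y, 0 ≤ y → HasDerivAt f (y ^ n / (1 + y)) y := by
    intro y hy
    have hy' : 1 + y ≠ 0 := by positivity
    have hlog := ((hasDerivAt_id y).const_add 1).log hy'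
    refine ((hlog.sub (hasDerivAt_logTaylor n y)).const_mul _).congr_deriv ?_
    have hgeom := mul_neg_geom_sum (-y) n
    have hsq : ((-1 : ℝ) ^ n) ^ 2 = 1 := by rw [← pow_mul, pow_mul', neg_one_sq, one_pow]
    simp only [id]
    have hinv : 1 / (1 + y) * (1 + y) = 1 := by field_simp
    rw [eq_div_iff hy']
    linear_combination (-1) ^ n * hinv - (-1) ^ n * hgeom + y ^ n * hsq
  have hmono : MonotoneOn f (Ici 0) := by
    refine monotoneOn_of_deriv_nonneg (convex_Ici 0)
      (fun y hy => (hf y hy).continuousAt.continuousWithinAt)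
      (fun y hy => ?_) (fun y hy => ?_) <;> rw [interior_Ici] at hy
    · exact (hf y (le_of_lt hy)).differentiableAt.differentiableWithinAt
    · rw [(hf y (le_of_lt hy)).deriv]
      have : 0 < y := hy
      positivity
  simpa [f, logTaylor] using hmono self_mem_Ici hx hx

lemma logTaylor_even_le_log_one_add (k : ℕ) {x : ℝ} (hx : 0 ≤ x) :
    logTaylor (2 * k) x ≤ log (1 + x) := by
  have h := neg_one_pow_mul_log_one_add_sub_logTaylor_nonneg (2 * k) hx
  rw [pow_mul, neg_one_sq, one_pow, one_mul] at h
  linarith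

lemma log_one_add_le_logTaylor_odd (k : ℕ) {x : ℝ} (hx : 0 ≤ x) :
    log (1 + x) ≤ logTaylor (2 * k + 1) x := by
  have h := neg_one_pow_mul_log_one_add_sub_logTaylor_nonneg (2 * k + 1) hx
  rw [pow_succ, pow_mul, neg_one_sq, one_pow, one_mul] at h
  linarith

lemma lt_logTaylor_eight {m : ℝ} (hm : 2 ≤ m) :
    1 / (m + 1) + 1 / (2 * m) - 1 / (2 * (m + 1)) - 1 / (12 * m ^ 2) + 1 / (12 * (m + 1) ^ 2)
      < logTaylor 8 (1 / m) := by
  have hm0 : 0 < m := by linarith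
  have hdiff : logTaylor 8 (1 / m)
      - (1 / (m + 1) + 1 / (2 * m) - 1 / (2 * (m + 1)) - 1 / (12 * m ^ 2) + 1 / (12 * (m + 1) ^ 2))
      = (28 * m ^ 5 - 14 * m ^ 4 + 8 * m ^ 3 - 5 * m ^ 2 - 90 * m - 105)
          / (840 * m ^ 8 * (m + 1) ^ 2) := by
    norm_num [logTaylor, Finset.sum_range_succ]
    field_simp
    ring
  -- In powers of `m - 2` the numerator has positive coefficients; likewise in the next lemma.
  have hnum : 0 < 28 * m ^ 5 - 14 * m ^ 4 + 8 * m ^ 3 - 5 * m ^ 2 - 90 * m - 105 := by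
    have ht := sub_nonneg.2 hm
    nlinarith [pow_nonneg ht 2, pow_nonneg ht 3, pow_nonneg ht 4, pow_nonneg ht 5]
  rw [← sub_pos, hdiff]
  positivity

lemma logTaylor_eleven_lt {m : ℝ} (hm : 2 ≤ m) :
    logTaylor 11 (1 / m)
      < 1 / (m + 1) + 1 / (2 * m) - 1 / (2 * (m + 1)) - 1 / (12 * m ^ 2) + 1 / (12 * (m + 1) ^ 2)
        + 1 / (120 * m ^ 4) - 1 / (120 * (m + 1) ^ 4) := by
  have hm0 : 0 < m := by linarith
  have hdiff : 1 / (m + 1) + 1 / (2 * m) - 1 / (2 * (m + 1)) - 1 / (12 * m ^ 2)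
        + 1 / (12 * (m + 1) ^ 2) + 1 / (120 * m ^ 4) - 1 / (120 * (m + 1) ^ 4)
        - logTaylor 11 (1 / m)
      = (660 * m ^ 8 + 330 * m ^ 7 - 44 * m ^ 6 + 22 * m ^ 5 - 12 * m ^ 4 - 2303 * m ^ 3
          - 7112 * m ^ 2 - 7308 * m - 2520) / (27720 * m ^ 11 * (m + 1) ^ 4) := by
    norm_num [logTaylor, Finset.sum_range_succ]
    field_simp
    ring
  have hnum : 0 < 660 * m ^ 8 + 330 * m ^ 7 - 44 * m ^ 6 + 22 * m ^ 5 - 12 * m ^ 4 - 2303 * m ^ 3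
      - 7112 * m ^ 2 - 7308 * m - 2520 := by
    have ht := sub_nonneg.2 hm
    nlinarith [pow_nonneg ht 2, pow_nonneg ht 3, pow_nonneg ht 4, pow_nonneg ht 5,
      pow_nonneg ht 6, pow_nonneg ht 7, pow_nonneg ht 8]
  rw [← sub_pos, hdiff]
  positivity

noncomputable def eulerMascheroniUpper (n : ℕ) : ℝ :=
  harmonic n - log n - 1 / (2 * n) + 1 / (12 * n ^ 2)

noncomputable def eulerMascheroniLower (n : ℕ) : ℝ :=
  eulerMascheroniUpper n - 1 / (120 * n ^ 4)

lemma tendsto_eulerMascheroniUpper :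
    Tendsto eulerMascheroniUpper atTop (𝓝 eulerMascheroniConstant) := by
  have h := (tendsto_harmonic_sub_log.sub (tendsto_const_div_atTop_nhds_zero_nat (1 / 2 : ℝ))).add
    (tendsto_const_div_pow (1 / 12) 2 two_ne_zero)
  rw [sub_zero, add_zero] at h
  refine h.congr fun n => ?_
  rw [eulerMascheroniUpper]
  ring

lemma tendsto_eulerMascheroniLower :
    Tendsto eulerMascheroniLower atTop (𝓝 eulerMascheroniConstant) := by
  have h := tendsto_eulerMascheroniUpper.sub (tendsto_const_div_pow (1 / 120) 4 four_ne_zero)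
  rw [sub_zero] at h
  refine h.congr fun n => ?_
  rw [eulerMascheroniLower]
  ring

lemma log_succ_eq_log_add_log_one_add_inv {n : ℕ} (hn : n ≠ 0) :
    log ((n : ℝ) + 1) = log n + log (1 + 1 / n) := by
  have hn' : (n : ℝ) ≠ 0 := Nat.cast_ne_zero.2 hn
  rw [← log_mul hn' (by positivity)]
  congr 1
  field_simp

lemma eulerMascheroniUpper_sub_succ {n : ℕ} (hn : n ≠ 0) :
    eulerMascheroniUpper n - eulerMascheroniUpper (n + 1) = log (1 + 1 / n)
      - (1 / (n + 1) + 1 / (2 * n) - 1 / (2 * (n + 1)) - 1 / (12 * n ^ 2)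
        + 1 / (12 * (n + 1) ^ 2)) := by
  simp only [eulerMascheroniUpper, harmonic_succ]
  push_cast
  rw [log_succ_eq_log_add_log_one_add_inv hn]
  ring

lemma eulerMascheroniUpper_succ_lt {n : ℕ} (hn : n ≠ 0) :
    eulerMascheroniUpper (n + 1) < eulerMascheroniUpper n := by
  rw [← sub_pos, eulerMascheroniUpper_sub_succ hn]
  obtain rfl | hn2 : n = 1 ∨ 2 ≤ n := by omega
  · norm_num
    linarith [log_two_gt_d9]
  · have hm : (2 : ℝ) ≤ n := by exact_mod_cast hn2
    have hx : 0 ≤ 1 / (n : ℝ) := by positivity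
    linarith [lt_logTaylor_eight hm, logTaylor_even_le_log_one_add 4 hx]

lemma eulerMascheroniLower_lt_succ {n : ℕ} (hn : 2 ≤ n) :
    eulerMascheroniLower n < eulerMascheroniLower (n + 1) := by
  have hstep := eulerMascheroniUpper_sub_succ (n := n) (by omega)
  have hm : (2 : ℝ) ≤ n := by exact_mod_cast hn
  simp only [eulerMascheroniLower]
  push_cast
  have hx : 0 ≤ 1 / (n : ℝ) := by positivity
  linarith [logTaylor_eleven_lt hm, log_one_add_le_logTaylor_odd 5 hx]

lemma eulerMascheroniConstant_lt_eulerMascheroniUpper {n : ℕ} (hn : n ≠ 0) :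
    eulerMascheroniConstant < eulerMascheroniUpper n := by
  have hanti : StrictAnti fun k => eulerMascheroniUpper (k + 1) :=
    strictAnti_nat_of_succ_lt fun k => eulerMascheroniUpper_succ_lt k.succ_ne_zero
  have hlim := (tendsto_add_atTop_iff_nat 1).2 tendsto_eulerMascheroniUpper
  exact (hanti.antitone.le_of_tendsto hlim n).trans_lt (eulerMascheroniUpper_succ_lt hn)

lemma eulerMascheroniLower_lt_eulerMascheroniConstant {n : ℕ} (hn : 2 ≤ n) :
    eulerMascheroniLower n < eulerMascheroniConstant := by
  have hmono : StrictMono fun k => eulerMascheroniLower (k + 2) :=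
    strictMono_nat_of_lt_succ fun k => eulerMascheroniLower_lt_succ (Nat.le_add_left 2 k)
  have hlim := (tendsto_add_atTop_iff_nat 2).2 tendsto_eulerMascheroniLower
  obtain ⟨k, rfl⟩ := Nat.exists_eq_add_of_le' hn
  exact (eulerMascheroniLower_lt_succ hn).trans_le (hmono.monotone.ge_of_tendsto hlim (k + 1))

lemma sum_Icc_one_div_two_mul_sub_one (k : ℕ) :
    ∑ j ∈ Icc 1 k, (1 : ℝ) / (2 * (j : ℝ) - 1) = harmonic (2 * k) - harmonic k / 2 := by
  induction k with
  | zero => simp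
  | succ k ih =>
    rw [Finset.sum_Icc_succ_top (Nat.le_add_left 1 k), ih, mul_add_one, harmonic_succ,
      harmonic_succ, harmonic_succ]
    push_cast
    rw [show 2 * ((k : ℝ) + 1) - 1 = 2 * k + 1 by ring,
      show 2 * (k : ℝ) + 1 + 1 = 2 * (k + 1) by ring, mul_inv]
    ring

lemma odd_harmonic_remainder_lt {x : ℝ} (hx : 1 ≤ x) :
    1 / (2 * (2 * x)) - 1 / (12 * (2 * x) ^ 2) + 1 / (120 * (2 * x) ^ 4)
      - (1 / (2 * x) - 1 / (12 * x ^ 2)) / 2 < 1 / (23 * x ^ 2) / 2 := by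
  have hx0 : 0 < x := by linarith
  rw [← sub_pos]
  field_simp
  nlinarith

theorem odd_harmonic_upper_bound (k : ℕ) (hk : 1 ≤ k) :
    (∑ j ∈ Finset.Icc 1 k, (1 : ℝ) / (2 * (j : ℝ) - 1))
      < (Real.log (k : ℝ) + Real.log 4 + Real.eulerMascheroniConstant
          + 1 / (23 * (k : ℝ) ^ 2)) / 2 := by
  have hk1 : (1 : ℝ) ≤ k := by exact_mod_cast hk
  have hupper := eulerMascheroniConstant_lt_eulerMascheroniUpper (n := k) (by omega)
  have hlower := eulerMascheroniLower_lt_eulerMascheroniConstant (n := 2 * k) (by omega)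
  simp only [eulerMascheroniLower, eulerMascheroniUpper] at hupper hlower
  push_cast at hlower
  have hlog2k : log (2 * k) = log 2 + log k := log_mul two_ne_zero (by positivity)
  have hlog4 : log 4 = 2 * log 2 := by
    rw [show (4 : ℝ) = 2 ^ 2 by norm_num, log_pow, Nat.cast_ofNat]
  rw [sum_Icc_one_div_two_mul_sub_one]
  linarith [odd_harmonic_remainder_lt hk1]
end

section
/- For each λ ≤ 0 and R > 0, the limit k_λ := lim_{δ→0⁺} [ ∫_{δ/(2R)}^{π/2} e^{−√(−λ)·2R sin(s)}/(2π sin(s)) ds + (ln δ)/(2π) ] exists in ℝ and equals ∫₀^{π/2} (e^{−√(−λ)·2R sin(s)} − 1)/(2π sin s) ds + ln(4R)/(2π). -/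
/-!
Since `log (tan (s / 2))` is a primitive of `csc s = (sin s)⁻¹`, for any `f` with `f - csc`
integrable on `[0, π/2]`,
`∫_ε^{π/2} f + log ε = ∫_ε^{π/2} (f - csc) + log 2 + (log (ε/2) - log (tan (ε/2)))`,
which tends to `∫_0^{π/2} (f - csc) + log 2` because `tan u ~ u`. For
`f s = exp (-a sin s) / sin s` with `a = 2R √(-λ) ≥ 0` the difference is bounded by `a`, and the
substitution `ε = δ / (2R)` turns `log 2` into `log (4R)`.
-/

open Real Filter MeasureTheory Set intervalIntegral Topology

theorem hasDerivAt_log_tan_half {x : ℝ} (hx₀ : 0 < x) (hxπ : x < π) :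
    HasDerivAt (fun y => log (tan (y / 2))) (sin x)⁻¹ x := by
  have hcos : 0 < cos (x / 2) := cos_pos_of_mem_Ioo ⟨by linarith, by linarith⟩
  have hsin : 0 < sin (x / 2) := sin_pos_of_pos_of_lt_pi (by linarith) (by linarith)
  have htan : HasDerivAt (fun y => tan (y / 2)) (1 / cos (x / 2) ^ 2 * (1 / 2)) x :=
    (hasDerivAt_tan hcos.ne').comp (h := fun y => y / 2) x ((hasDerivAt_id' x).div_const 2)
  convert (htan.log (tan_pos_of_pos_of_lt_pi_div_two (by linarith) (by linarith)).ne') using 1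
  have hsin_x : sin x = 2 * sin (x / 2) * cos (x / 2) := by rw [← sin_two_mul]; ring_nf
  rw [tan_eq_sin_div_cos, hsin_x]
  field_simp

theorem integral_inv_sin {a b : ℝ} (ha : a ∈ Ioo 0 π) (hb : b ∈ Ioo 0 π) :
    ∫ x in a..b, (sin x)⁻¹ = log (tan (b / 2)) - log (tan (a / 2)) := by
  have hsub : uIcc a b ⊆ Ioo 0 π := ordConnected_Ioo.uIcc_subset ha hb
  refine integral_eq_sub_of_hasDerivAt
    (fun x hx => hasDerivAt_log_tan_half (hsub hx).1 (hsub hx).2) ?_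
  exact (continuousOn_sin.inv₀ fun x hx => (sin_pos_of_mem_Ioo (hsub hx)).ne').intervalIntegrable

theorem tendsto_log_sub_log_tan :
    Tendsto (fun u => log u - log (tan u)) (𝓝[>] 0) (𝓝 0) := by
  have hslope : Tendsto (fun u => tan u / u) (𝓝[>] 0) (𝓝 1) := by
    simpa [div_eq_inv_mul] using (hasDerivAt_tan (x := 0) (by simp)).tendsto_slope_zero_right
  have hlog := ((continuousAt_log one_ne_zero).tendsto.comp hslope).neg
  rw [log_one, neg_zero] at hlog
  refine hlog.congr' ?_
  filter_upwards [Ioo_mem_nhdsGT (half_pos pi_pos)] with u hu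
  rw [Function.comp_apply, log_div (tan_pos_of_pos_of_lt_pi_div_two hu.1 hu.2).ne' hu.1.ne']
  ring

theorem tendsto_div_const_nhdsGT_zero {c : ℝ} (hc : 0 < c) :
    Tendsto (fun x => x / c) (𝓝[>] 0) (𝓝[>] 0) := by
  simpa [div_eq_mul_inv] using
    TendstoNhdsWithinIoi.mul_const (inv_pos.2 hc) (tendsto_id (x := 𝓝[>] (0 : ℝ)))

theorem tendsto_integral_add_log {f : ℝ → ℝ}
    (hf : IntervalIntegrable (fun s => f s - (sin s)⁻¹) volume 0 (π / 2)) :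
    Tendsto (fun ε => (∫ s in ε..π / 2, f s) + log ε) (𝓝[>] 0)
      (𝓝 ((∫ s in 0..π / 2, f s - (sin s)⁻¹) + log 2)) := by
  have hπ : 0 < π / 2 := half_pos pi_pos
  have hprim : Tendsto (fun ε => ∫ s in ε..π / 2, f s - (sin s)⁻¹) (𝓝[>] 0)
      (𝓝 (∫ s in 0..π / 2, f s - (sin s)⁻¹)) := by
    have hcont := continuousOn_primitive_interval_left ((intervalIntegrable_iff' (by simp)).mp hf)
    refine ((hcont 0 left_mem_uIcc).mono_of_mem_nhdsWithin ?_).tendsto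
    rw [uIcc_of_le hπ.le]
    exact Icc_mem_nhdsGT hπ
  have hlog : Tendsto (fun ε => log 2 + (log (ε / 2) - log (tan (ε / 2)))) (𝓝[>] 0)
      (𝓝 (log 2 + 0)) :=
    tendsto_const_nhds.add (tendsto_log_sub_log_tan.comp (tendsto_div_const_nhdsGT_zero two_pos))
  rw [← add_zero (log 2)]
  refine (hprim.add hlog).congr' ?_
  filter_upwards [Ioo_mem_nhdsGT hπ] with ε hε
  have hsub : uIcc ε (π / 2) ⊆ Ioo 0 π := by
    rw [uIcc_of_le hε.2.le]
    exact Icc_subset_Ioo hε.1 (by linarith [pi_pos])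
  have hinv : IntervalIntegrable (fun s => (sin s)⁻¹) volume ε (π / 2) :=
    (continuousOn_sin.inv₀ fun x hx => (sin_pos_of_mem_Ioo (hsub hx)).ne').intervalIntegrable
  have hg : IntervalIntegrable (fun s => f s - (sin s)⁻¹) volume ε (π / 2) :=
    hf.mono_set (uIcc_subset_uIcc (mem_uIcc_of_le hε.1.le hε.2.le) right_mem_uIcc)
  have hsplit : ∫ s in ε..π / 2, f s =
      (∫ s in ε..π / 2, f s - (sin s)⁻¹) + ∫ s in ε..π / 2, (sin s)⁻¹ := by
    rw [← integral_add hg hinv]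
    simp
  rw [hsplit, integral_inv_sin (hsub left_mem_uIcc) (hsub right_mem_uIcc),
    show π / 2 / 2 = π / 4 by ring, tan_pi_div_four, log_one,
    log_div hε.1.ne' two_ne_zero]
  ring

theorem abs_exp_neg_sub_one_le {x : ℝ} (hx : 0 ≤ x) : |exp (-x) - 1| ≤ x := by
  rw [abs_sub_comm, abs_of_nonneg (sub_nonneg.2 (exp_le_one_iff.2 (neg_nonpos.2 hx)))]
  linarith [one_sub_le_exp_neg x]

theorem intervalIntegrable_exp_neg_mul_sin_div_sin_sub_inv {a : ℝ} (ha : 0 ≤ a) :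
    IntervalIntegrable (fun s => exp (-a * sin s) / sin s - (sin s)⁻¹) volume 0 π := by
  refine (intervalIntegrable_const (c := a)).mono_fun' (by fun_prop) ?_
  refine ae_restrict_of_forall_mem measurableSet_uIoc fun s hs => ?_
  dsimp only
  rw [uIoc_of_le pi_pos.le] at hs
  have hsin : 0 ≤ sin s := sin_nonneg_of_nonneg_of_le_pi hs.1.le hs.2
  have hrw : exp (-a * sin s) / sin s - (sin s)⁻¹ = (exp (-(a * sin s)) - 1) / sin s := by
    rw [neg_mul]; ring
  rw [Real.norm_eq_abs, hrw, abs_div, abs_of_nonneg hsin]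
  exact div_le_of_le_mul₀ hsin ha (abs_exp_neg_sub_one_le (mul_nonneg ha hsin))

theorem klambda_limit_exists_general (lam R : ℝ) (hR : 0 < R) :
    Filter.Tendsto
      (fun δ : ℝ =>
        (∫ s in (δ / (2 * R))..(π / 2),
            Real.exp (-(Real.sqrt (-lam)) * (2 * R * Real.sin s)) / (2 * π * Real.sin s))
          + Real.log δ / (2 * π))
      (nhdsWithin 0 (Set.Ioi 0))
      (nhds ((∫ s in (0 : ℝ)..(π / 2),
          (Real.exp (-(Real.sqrt (-lam)) * (2 * R * Real.sin s)) - 1) / (2 * π * Real.sin s))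
        + Real.log (4 * R) / (2 * π))) := by
  set a := √(-lam) * (2 * R)
  have hexp : ∀ s, -√(-lam) * (2 * R * sin s) = -a * sin s := fun s => by ring
  simp_rw [hexp]
  have hf : IntervalIntegrable (fun s => exp (-a * sin s) / sin s - (sin s)⁻¹) volume 0 (π / 2) :=
    (intervalIntegrable_exp_neg_mul_sin_div_sin_sub_inv (by positivity)).mono_set
      (uIcc_subset_uIcc left_mem_uIcc (mem_uIcc_of_le (by positivity) (by linarith [pi_pos])))
  have h2R : 0 < 2 * R := by positivity
  have hscaled := (((tendsto_integral_add_log hf).comp (tendsto_div_const_nhdsGT_zero h2R)).add_const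
    (log (2 * R))).div_const (2 * π)
  have hlimit_eq : (∫ s in (0 : ℝ)..π / 2, (exp (-a * sin s) - 1) / (2 * π * sin s))
      + log (4 * R) / (2 * π) =
      ((∫ s in (0 : ℝ)..π / 2, exp (-a * sin s) / sin s - (sin s)⁻¹) + log 2 + log (2 * R))
        / (2 * π) := by
    simp_rw [fun s => show (exp (-a * sin s) - 1) / (2 * π * sin s)
      = (exp (-a * sin s) / sin s - (sin s)⁻¹) / (2 * π) by ring, intervalIntegral.integral_div]
    rw [add_assoc _ (log 2), ← log_mul two_ne_zero h2R.ne']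
    ring_nf
  rw [hlimit_eq]
  refine hscaled.congr' ?_
  filter_upwards [self_mem_nhdsWithin] with δ (hδ : 0 < δ)
  simp_rw [Function.comp_apply, fun s => show exp (-a * sin s) / (2 * π * sin s)
      = exp (-a * sin s) / sin s / (2 * π) by ring, intervalIntegral.integral_div,
    log_div hδ.ne' h2R.ne']
  ring

theorem klambda_limit_exists (lam R : ℝ) (hlam : lam ≤ 0) (hR : 0 < R) :
    Filter.Tendsto
      (fun δ : ℝ =>
        (∫ s in (δ / (2 * R))..(π / 2),
            Real.exp (-(Real.sqrt (-lam)) * (2 * R * Real.sin s)) / (2 * π * Real.sin s))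
          + Real.log δ / (2 * π))
      (nhdsWithin 0 (Set.Ioi 0))
      (nhds ((∫ s in (0 : ℝ)..(π / 2),
          (Real.exp (-(Real.sqrt (-lam)) * (2 * R * Real.sin s)) - 1) / (2 * π * Real.sin s))
        + Real.log (4 * R) / (2 * π))) :=
  klambda_limit_exists_general lam R hR
end
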